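/- arXiv:2411.14875 — 4 statements merged into one kernel-verified Lean document; each statement's English description precedes it below -/
import Mathlib

section
/- Assume λ₂ > 0, X_i ≠ 0 for every column i, and ε > 0 satisfies ε < p λ₁ (‖X_i‖_r/(q λ₁))^{q/(q−1)} for every i. If β* ∈ ℝ^p is a generalized first-order stationary point of F_ε, then β* is a generalized first-order stationary point of F, and moreover for every i with β*_i ≠ 0 one has |β*_i| > (q λ₁ / ‖X_i‖_r)^{1/(1−q)}. -/
/-- Index for the ℓ_r norm with r ∈ {1, 2, ∞}. -/
inductive LrIndex : Type
  | one | two | inf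

/-- The ℓ_r norm on ℝ^n for r ∈ {1, 2, ∞}. -/
noncomputable def lrNorm {n : ℕ} (r : LrIndex) (z : Fin n → ℝ) : ℝ :=
  match r with
  | .one => ∑ j, |z j|
  | .two => Real.sqrt (∑ j, (z j) ^ 2)
  | .inf => ⨆ j, |z j|

/-- `v` is a subgradient of `z ↦ ‖z − y‖_r` at `z₀`. -/
def IsSubgradAt {n : ℕ} (r : LrIndex) (y v z₀ : Fin n → ℝ) : Prop :=
  ∀ z : Fin n → ℝ,
    lrNorm r (z₀ - y) + ∑ j, v j * (z j - z₀ j) ≤ lrNorm r (z - y)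

/-- The objective F(β) = ‖Xβ − y‖_r + λ₂‖β‖₂² + λ₁ Σᵢ |βᵢ|^q. -/
noncomputable def objF {n p : ℕ} (r : LrIndex) (X : Matrix (Fin n) (Fin p) ℝ)
    (y : Fin n → ℝ) (lam1 lam2 q : ℝ) (β : Fin p → ℝ) : ℝ :=
  lrNorm r (X.mulVec β - y) + lam2 * ∑ i, (β i) ^ 2 + lam1 * ∑ i, |β i| ^ q

/-- `β` is a generalized first-order stationary point of F. -/
def IsGenStat {n p : ℕ} (r : LrIndex) (X : Matrix (Fin n) (Fin p) ℝ)
    (y : Fin n → ℝ) (lam1 lam2 q : ℝ) (β : Fin p → ℝ) : Prop :=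
  ∃ v : Fin n → ℝ, IsSubgradAt r y v (X.mulVec β) ∧
    ∀ i : Fin p,
      β i * (∑ j, X j i * v j) + 2 * lam2 * (β i) ^ 2 + lam1 * q * |β i| ^ q = 0

/-- The ε-approximation h_u of t ↦ |t|^q. -/
noncomputable def hApprox (q u t : ℝ) : ℝ :=
  if u ^ (1 / (q - 1)) ≤ |t| then |t| ^ q
  else q * u * |t| + (1 - q) * u ^ (q / (q - 1))

/-- The ε-approximation objective F_ε. -/
noncomputable def objFeps {n p : ℕ} (r : LrIndex) (X : Matrix (Fin n) (Fin p) ℝ)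
    (y : Fin n → ℝ) (lam1 lam2 q ε : ℝ) (β : Fin p → ℝ) : ℝ :=
  lrNorm r (X.mulVec β - y) + lam2 * ∑ i, (β i) ^ 2
    + lam1 * ∑ i, hApprox q ((ε / (p * lam1)) ^ ((q - 1) / q)) (β i)

/-- `β` is a generalized first-order stationary point of F_ε (with u_ε = uε). -/
def IsGenStatEps {n p : ℕ} (r : LrIndex) (X : Matrix (Fin n) (Fin p) ℝ)
    (y : Fin n → ℝ) (lam1 lam2 q uε : ℝ) (β : Fin p → ℝ) : Prop :=
  ∃ v : Fin n → ℝ, ∃ d : Fin p → ℝ,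
    IsSubgradAt r y v (X.mulVec β) ∧
    (∀ i : Fin p, (∑ j, X j i * v j) + 2 * lam2 * β i + lam1 * d i = 0) ∧
    (∀ i : Fin p,
      (uε ^ (1 / (q - 1)) < |β i| →
        d i = q * |β i| ^ (q - 1) * Real.sign (β i)) ∧
      (β i ≠ 0 → |β i| ≤ uε ^ (1 / (q - 1)) →
        d i = q * uε * Real.sign (β i)) ∧
      (β i = 0 → |d i| ≤ q * uε))

/-! A subgradient `v` of `‖· − y‖_r` has dual norm at most one, so `|(Xᵀv)ᵢ| ≤ ‖Xᵢ‖_r`, and the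
bound on `ε` says exactly `‖Xᵢ‖_r < qλ₁u_ε`. On the linear piece of `h_{u_ε}` the stationarity
equation of `F_ε` would force `|(Xᵀv)ᵢ| = 2λ₂|βᵢ| + qλ₁u_ε > ‖Xᵢ‖_r`, so every nonzero `βᵢ` lies
where `h_{u_ε}` is `|t|^q`. There the equation of `F_ε`, multiplied by `βᵢ`, is that of `F`, and
`2λ₂|βᵢ| + qλ₁|βᵢ|^(q−1) = |(Xᵀv)ᵢ| ≤ ‖Xᵢ‖_r` gives the lower bound on `|βᵢ|`. -/

theorem lrNorm_neg {n : ℕ} (r : LrIndex) (z : Fin n → ℝ) : lrNorm r (-z) = lrNorm r z := by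
  cases r <;> simp [lrNorm]

theorem lrNorm_two_eq_norm {n : ℕ} (z : Fin n → ℝ) :
    lrNorm .two z = ‖(WithLp.toLp 2 z : EuclideanSpace ℝ (Fin n))‖ := by
  simp only [lrNorm, EuclideanSpace.norm_eq, Real.norm_eq_abs, sq_abs]

theorem lrNorm_add_le {n : ℕ} (r : LrIndex) (a b : Fin n → ℝ) :
    lrNorm r (a + b) ≤ lrNorm r a + lrNorm r b := by
  cases r with
  | one =>
    simp only [lrNorm, Pi.add_apply, ← Finset.sum_add_distrib]
    exact Finset.sum_le_sum fun j _ => abs_add_le _ _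
  | two =>
    simp only [lrNorm_two_eq_norm, WithLp.toLp_add]
    exact norm_add_le _ _
  | inf =>
    rcases isEmpty_or_nonempty (Fin n) with _ | _
    · simp [lrNorm]
    · have hbdd (c : Fin n → ℝ) : BddAbove (Set.range fun j => |c j|) :=
        (Set.finite_range _).bddAbove
      refine ciSup_le fun j => (abs_add_le _ _).trans ?_
      exact add_le_add (le_ciSup (hbdd a) j) (le_ciSup (hbdd b) j)

theorem IsSubgradAt.abs_sum_mul_le {n : ℕ} {r : LrIndex} {y v z₀ : Fin n → ℝ}
    (h : IsSubgradAt r y v z₀) (w : Fin n → ℝ) : |∑ j, v j * w j| ≤ lrNorm r w := by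
  have pairing_le (w : Fin n → ℝ) : ∑ j, v j * w j ≤ lrNorm r w := by
    have hsub := h (z₀ + w)
    have htri := lrNorm_add_le r (z₀ - y) w
    rw [show z₀ + w - y = (z₀ - y) + w by abel] at hsub
    simp only [Pi.add_apply, add_sub_cancel_left] at hsub
    linarith
  refine abs_le.2 ⟨?_, pairing_le w⟩
  have := pairing_le (-w)
  rw [lrNorm_neg] at this
  simp only [Pi.neg_apply, mul_neg, Finset.sum_neg_distrib] at this
  linarith

theorem mul_sign_eq_abs (t : ℝ) : t * Real.sign t = |t| := by
  rcases lt_trichotomy t 0 with h | rfl | h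
  · rw [Real.sign_of_neg h, abs_of_neg h, mul_neg_one]
  · simp
  · rw [Real.sign_of_pos h, abs_of_pos h, mul_one]

theorem abs_eq_of_add_mul_add_mul_sign_eq_zero {s a b t : ℝ} (ha : 0 ≤ a) (hb : 0 ≤ b)
    (ht : t ≠ 0) (h : s + a * t + b * Real.sign t = 0) : |s| = a * |t| + b := by
  rw [show s = -(a * t + b * Real.sign t) by linarith, abs_neg]
  rcases ht.lt_or_gt with ht | ht
  · rw [Real.sign_of_neg ht, abs_of_neg ht, abs_of_nonpos (by nlinarith)]
    ring
  · rw [Real.sign_of_pos ht, abs_of_pos ht, abs_of_nonneg (by positivity)]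
    ring

/-- The hypothesis on `ε` rewritten as `N < q λ₁ u_ε` (with `c = p λ₁`, `a = q λ₁`); for `N = 0`
it is contradictory, since `0 ^ x = 0` for `x ≠ 0`. -/
theorem lt_mul_rpow_of_lt_mul_div_rpow {a c N ε q : ℝ} (ha : 0 < a) (hc : 0 < c) (hN : 0 ≤ N)
    (hε : 0 < ε) (hq0 : 0 < q) (hq1 : q < 1) (h : ε < c * (N / a) ^ (q / (q - 1))) :
    N < a * (ε / c) ^ ((q - 1) / q) := by
  have he : (q - 1) / q < 0 := div_neg_of_neg_of_pos (by linarith) hq0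
  have hlt : ε / c < (N / a) ^ ((q - 1) / q)⁻¹ := by
    rwa [inv_div, div_lt_iff₀' hc]
  have hNa : 0 < N / a := by
    refine (div_nonneg hN ha.le).lt_of_ne fun h0 => ?_
    rw [← h0, Real.zero_rpow (inv_ne_zero he.ne)] at hlt
    exact (div_pos hε hc).not_gt hlt
  rw [← div_lt_iff₀' ha]
  exact (Real.lt_rpow_inv_iff_of_neg (div_pos hε hc) hNa he).1 hlt

theorem rpow_one_div_lt_of_mul_rpow_lt {a t N q : ℝ} (ha : 0 < a) (ht : 0 < t) (hq1 : q < 1)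
    (h : a * t ^ (q - 1) < N) : (a / N) ^ (1 / (1 - q)) < t := by
  have hN : 0 < N := lt_trans (by positivity) h
  have hcancel : t ^ (q - 1) * t ^ (1 - q) = 1 := by
    rw [← Real.rpow_add ht, show q - 1 + (1 - q) = 0 by ring, Real.rpow_zero]
  have hlt : a / N < t ^ (1 - q) := by
    rw [div_lt_iff₀' hN]
    calc a = a * t ^ (q - 1) * t ^ (1 - q) := by rw [mul_assoc, hcancel, mul_one]
      _ < N * t ^ (1 - q) := by gcongr
  rw [one_div]
  exact (Real.rpow_inv_lt_iff_of_pos (by positivity) ht.le (by linarith)).2 hlt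

section Coordinate

/-! One coordinate of the stationarity system of `F_ε`: `s = (Xᵀv)ᵢ`, `t = βᵢ`, `d = dᵢ`,
`N = ‖Xᵢ‖_r`. -/

variable {lam1 lam2 q u s t d N : ℝ}

theorem threshold_lt_abs_of_stationary_eps (hlam2 : 0 ≤ lam2) (ht : t ≠ 0) (hs : |s| ≤ N)
    (hN : N < q * lam1 * u) (heq : s + 2 * lam2 * t + lam1 * d = 0)
    (hd : |t| ≤ u ^ (1 / (q - 1)) → d = q * u * Real.sign t) :
    u ^ (1 / (q - 1)) < |t| := by
  by_contra! hle
  have heq' : s + 2 * lam2 * t + q * lam1 * u * Real.sign t = 0 := by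
    rw [hd hle] at heq
    linear_combination heq
  have habs := abs_eq_of_add_mul_add_mul_sign_eq_zero (by positivity)
    ((abs_nonneg s).trans (hs.trans hN.le)) ht heq'
  have : 0 ≤ 2 * lam2 * |t| := by positivity
  linarith

theorem stationary_of_stationary_eps (hq : q ≠ 0) (heq : s + 2 * lam2 * t + lam1 * d = 0)
    (hd : t ≠ 0 → d = q * |t| ^ (q - 1) * Real.sign t) :
    t * s + 2 * lam2 * t ^ 2 + lam1 * q * |t| ^ q = 0 := by
  rcases eq_or_ne t 0 with rfl | ht
  · simp [Real.zero_rpow hq]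
  have htd : t * d = q * |t| ^ q := by
    rw [hd ht, show t * (q * |t| ^ (q - 1) * Real.sign t) = q * |t| ^ (q - 1) * (t * Real.sign t)
      by ring, mul_sign_eq_abs, mul_assoc, ← Real.rpow_add_one (abs_ne_zero.2 ht), sub_add_cancel]
  linear_combination t * heq - lam1 * htd

theorem rpow_lt_abs_of_stationary_eps (hlam1 : 0 < lam1) (hlam2 : 0 < lam2) (hq0 : 0 < q)
    (hq1 : q < 1) (ht : t ≠ 0) (hs : |s| ≤ N) (heq : s + 2 * lam2 * t + lam1 * d = 0)
    (hd : d = q * |t| ^ (q - 1) * Real.sign t) :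
    (q * lam1 / N) ^ (1 / (1 - q)) < |t| := by
  have htpos : 0 < |t| := abs_pos.2 ht
  have heq' : s + 2 * lam2 * t + q * lam1 * |t| ^ (q - 1) * Real.sign t = 0 := by
    rw [hd] at heq
    linear_combination heq
  have habs := abs_eq_of_add_mul_add_mul_sign_eq_zero (by positivity) (by positivity) ht heq'
  refine rpow_one_div_lt_of_mul_rpow_lt (by positivity) htpos hq1 ?_
  have : 0 < 2 * lam2 * |t| := by positivity
  linarith

end Coordinate

theorem eps_stationary_is_stationary_general {n p : ℕ}
    (r : LrIndex) (X : Matrix (Fin n) (Fin p) ℝ) (y : Fin n → ℝ)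
    (lam1 lam2 q ε : ℝ) (hlam1 : 0 < lam1) (hlam2 : 0 < lam2)
    (hq0 : 0 < q) (hq1 : q < 1)
    (hε : 0 < ε)
    (hεb : ∀ i : Fin p,
      ε < (p : ℝ) * lam1 * (lrNorm r (fun j => X j i) / (q * lam1)) ^ (q / (q - 1)))
    (βs : Fin p → ℝ)
    (hstat : IsGenStatEps r X y lam1 lam2 q ((ε / (p * lam1)) ^ ((q - 1) / q)) βs) :
    IsGenStat r X y lam1 lam2 q βs ∧
    ∀ i : Fin p, βs i ≠ 0 →
      (q * lam1 / lrNorm r (fun j => X j i)) ^ (1 / (1 - q)) < |βs i| := by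
  obtain ⟨v, d, hsub, hlin, hd⟩ := hstat
  have hdual (i : Fin p) : |∑ j, X j i * v j| ≤ lrNorm r (fun j => X j i) := by
    simpa only [mul_comm] using hsub.abs_sum_mul_le (fun j => X j i)
  have hnorm_lt (i : Fin p) :
      lrNorm r (fun j => X j i) < q * lam1 * (ε / (p * lam1)) ^ ((q - 1) / q) :=
    lt_mul_rpow_of_lt_mul_div_rpow (by positivity)
      (mul_pos (Nat.cast_pos.2 i.pos) hlam1) ((abs_nonneg _).trans (hdual i)) hε hq0 hq1 (hεb i)
  have hbig (i : Fin p) (hne : βs i ≠ 0) :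
      ((ε / (p * lam1)) ^ ((q - 1) / q)) ^ (1 / (q - 1)) < |βs i| :=
    threshold_lt_abs_of_stationary_eps hlam2.le hne (hdual i) (hnorm_lt i) (hlin i)
      ((hd i).2.1 hne)
  refine ⟨⟨v, hsub, fun i => ?_⟩, fun i hne => ?_⟩
  · exact stationary_of_stationary_eps hq0.ne' (hlin i) fun hne => (hd i).1 (hbig i hne)
  · exact rpow_lt_abs_of_stationary_eps hlam1 hlam2 hq0 hq1 hne (hdual i) (hlin i)
      ((hd i).1 (hbig i hne))

/-- a generalized first-order stationary point of F_ε is one of F,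
and its nonzero entries obey the lower bound. -/
theorem eps_stationary_is_stationary {n p : ℕ} (hn : 0 < n) (hp : 0 < p)
    (r : LrIndex) (X : Matrix (Fin n) (Fin p) ℝ) (y : Fin n → ℝ)
    (lam1 lam2 q ε : ℝ) (hlam1 : 0 < lam1) (hlam2 : 0 < lam2)
    (hq0 : 0 < q) (hq1 : q < 1)
    (hX : ∀ i : Fin p, (fun j => X j i) ≠ (0 : Fin n → ℝ))
    (hε : 0 < ε)
    (hεb : ∀ i : Fin p,
      ε < (p : ℝ) * lam1 * (lrNorm r (fun j => X j i) / (q * lam1)) ^ (q / (q - 1)))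
    (βs : Fin p → ℝ)
    (hstat : IsGenStatEps r X y lam1 lam2 q ((ε / (p * lam1)) ^ ((q - 1) / q)) βs) :
    IsGenStat r X y lam1 lam2 q βs ∧
    ∀ i : Fin p, βs i ≠ 0 →
      (q * lam1 / lrNorm r (fun j => X j i)) ^ (1 / (1 - q)) < |βs i| :=
  eps_stationary_is_stationary_general r X y lam1 lam2 q ε hlam1 hlam2 hq0 hq1 hε hεb βs hstat
end

section
/- Let λ₂ ≥ 0, let w ∈ ℝ^p have nonnegative entries, and fix β̄ ∈ ℝ^p. Then β̄ is a global minimizer of G_w if and only if there exists μ ≥ 0 such that β̄ is a global minimizer of the function β ↦ G_w(β) + (μ/2)‖Xβ − Xβ̄‖₂². -/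
/-- Weighted objective G_w(β) = ‖Xβ − y‖_r + λ₂‖β‖₂² + qλ₁ Σᵢ wᵢ|βᵢ|. -/
noncomputable def objG {n p : ℕ} (r : LrIndex) (X : Matrix (Fin n) (Fin p) ℝ)
    (y : Fin n → ℝ) (lam1 lam2 q : ℝ) (w : Fin p → ℝ) (β : Fin p → ℝ) : ℝ :=
  lrNorm r (X.mulVec β - y) + lam2 * ∑ i, (β i) ^ 2 + q * lam1 * ∑ i, w i * |β i|

/-! If β̄ minimizes `G + Q(· - β̄)` where `Q v = (μ/2)‖Xv‖²` is homogeneous of degree two, then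
convexity of `G` along the segment `β̄ + t(β - β̄)` gives `G β̄ ≤ G β + t Q(β - β̄)` for every
`t ∈ (0, 1]`, and letting `t → 0⁺` shows that β̄ minimizes `G`. The fit term of `G` is convex
because each `lrNorm r` is the norm of a `PiLp` space. -/

open Set Filter Topology ENNReal Matrix

theorem ConvexOn.finset_sum {𝕜 E ι β : Type*} [Semiring 𝕜] [PartialOrder 𝕜] [AddCommMonoid E]
    [AddCommMonoid β] [PartialOrder β] [IsOrderedAddMonoid β] [SMul 𝕜 E] [Module 𝕜 β]
    {s : Set E} (hs : Convex 𝕜 s) (t : Finset ι) {f : ι → E → β}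
    (hf : ∀ i ∈ t, ConvexOn 𝕜 s (f i)) : ConvexOn 𝕜 s fun x => ∑ i ∈ t, f i x := by
  convert Finset.sum_induction f (ConvexOn 𝕜 s) (fun _ _ => ConvexOn.add)
    (convexOn_const (0 : β) hs) hf using 1
  funext x
  exact (Finset.sum_apply x t f).symm

theorem ConvexOn.le_of_forall_le_add_quadratic {E : Type*} [AddCommGroup E] [Module ℝ E]
    {f Q : E → ℝ} (hf : ConvexOn ℝ univ f) (hQ : ∀ (t : ℝ) v, Q (t • v) = t ^ 2 * Q v) {x : E}
    (hx : ∀ y, f x ≤ f y + Q (y - x)) (y : E) : f x ≤ f y := by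
  have hsmall : ∀ t ∈ Ioc (0 : ℝ) 1, f x ≤ f y + t * Q (y - x) := by
    rintro t ⟨ht0, ht1⟩
    have hseg : f (x + t • (y - x)) ≤ (1 - t) * f x + t * f y := by
      have hcombo : (1 - t) • x + t • y = x + t • (y - x) := by module
      simpa only [hcombo, smul_eq_mul] using
        hf.2 (mem_univ x) (mem_univ y) (sub_nonneg.2 ht1) ht0.le (sub_add_cancel 1 t)
    have hpen := hx (x + t • (y - x))
    rw [add_sub_cancel_left, hQ] at hpen
    refine le_of_mul_le_mul_left ?_ ht0
    linarith
  have hlim : Tendsto (fun t : ℝ => f y + t * Q (y - x)) (𝓝[>] 0) (𝓝 (f y)) := by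
    have : Tendsto (fun t : ℝ => f y + t * Q (y - x)) (𝓝 0) (𝓝 (f y + 0 * Q (y - x))) :=
      (continuous_const.add (continuous_id.mul continuous_const)).tendsto 0
    simpa using this.mono_left nhdsWithin_le_nhds
  exact ge_of_tendsto hlim (eventually_of_mem (Ioc_mem_nhdsGT one_pos) hsmall)

def LrIndex.toENNReal : LrIndex → ℝ≥0∞
  | .one => 1
  | .two => 2
  | .inf => ∞

instance LrIndex.fact_one_le_toENNReal (r : LrIndex) : Fact (1 ≤ r.toENNReal) :=
  ⟨by cases r <;> simp [LrIndex.toENNReal]⟩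

theorem lrNorm_eq_norm_toLp {n : ℕ} (r : LrIndex) (z : Fin n → ℝ) :
    lrNorm r z = ‖WithLp.toLp r.toENNReal z‖ := by
  cases r with
  | one =>
    change _ = ‖WithLp.toLp 1 z‖
    simp [lrNorm, PiLp.norm_eq_of_L1]
  | two =>
    change _ = ‖WithLp.toLp 2 z‖
    simp [lrNorm, PiLp.norm_eq_of_L2]
  | inf =>
    change _ = ‖WithLp.toLp ∞ z‖
    simp [lrNorm, PiLp.norm_eq_ciSup]

theorem convexOn_lrNorm_sub {n : ℕ} (r : LrIndex) (y : Fin n → ℝ) :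
    ConvexOn ℝ univ fun z => lrNorm r (z - y) := by
  have := (convexOn_univ_dist (WithLp.toLp r.toENNReal y)).comp_linearMap
    (WithLp.linearEquiv r.toENNReal ℝ (Fin n → ℝ)).symm.toLinearMap
  simpa [lrNorm_eq_norm_toLp, dist_eq_norm, Function.comp_def] using this

theorem convexOn_objG {n p : ℕ} (r : LrIndex) (X : Matrix (Fin n) (Fin p) ℝ) (y : Fin n → ℝ)
    {lam1 lam2 q : ℝ} (hlam2 : 0 ≤ lam2) (hqlam1 : 0 ≤ q * lam1) {w : Fin p → ℝ}
    (hw : ∀ i, 0 ≤ w i) : ConvexOn ℝ univ (objG r X y lam1 lam2 q w) := by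
  have hfit : ConvexOn ℝ univ fun β => lrNorm r (X *ᵥ β - y) :=
    (convexOn_lrNorm_sub r y).comp_linearMap X.mulVecLin
  have hridge : ConvexOn ℝ univ fun β : Fin p → ℝ => ∑ i, β i ^ 2 :=
    .finset_sum convex_univ _ fun i _ =>
      (even_two.convexOn_pow (𝕜 := ℝ)).comp_linearMap
        (LinearMap.proj i : (Fin p → ℝ) →ₗ[ℝ] ℝ)
  have hlasso : ConvexOn ℝ univ fun β : Fin p → ℝ => ∑ i, w i * |β i| :=
    .finset_sum convex_univ _ fun i _ =>
      ((convexOn_univ_norm (E := ℝ)).smul (hw i)).comp_linearMap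
        (LinearMap.proj i : (Fin p → ℝ) →ₗ[ℝ] ℝ)
  exact (hfit.add (hridge.smul hlam2)).add (hlasso.smul hqlam1)

theorem prox_min_iff_min_general {n p : ℕ}
    (r : LrIndex) (X : Matrix (Fin n) (Fin p) ℝ) (y : Fin n → ℝ)
    (lam1 lam2 q : ℝ) (hlam1 : 0 < lam1) (hlam2 : 0 ≤ lam2)
    (hq0 : 0 < q)
    (w : Fin p → ℝ) (hw : ∀ i, 0 ≤ w i) (βbar : Fin p → ℝ) :
    (∀ β : Fin p → ℝ, objG r X y lam1 lam2 q w βbar ≤ objG r X y lam1 lam2 q w β) ↔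
    ∃ μ : ℝ, 0 ≤ μ ∧ ∀ β : Fin p → ℝ,
      objG r X y lam1 lam2 q w βbar
          + μ / 2 * ∑ j, ((X.mulVec βbar - X.mulVec βbar) j) ^ 2
        ≤ objG r X y lam1 lam2 q w β
          + μ / 2 * ∑ j, ((X.mulVec β - X.mulVec βbar) j) ^ 2 := by
  constructor
  · intro hmin
    exact ⟨0, le_rfl, fun β => by simpa using hmin β⟩
  · rintro ⟨μ, -, hprox⟩
    have hconvex := convexOn_objG r X y hlam2 (mul_nonneg hq0.le hlam1.le) hw
    refine hconvex.le_of_forall_le_add_quadratic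
      (Q := fun v => μ / 2 * ∑ j, (X *ᵥ v) j ^ 2) (fun t v => ?_) (fun β => ?_)
    · simp only [mulVec_smul, Pi.smul_apply, smul_eq_mul, mul_pow, ← Finset.mul_sum]
      ring
    · simpa [mulVec_sub] using hprox β

/-- β̄ is a global minimizer of G_w iff for some μ ≥ 0 it is a global
minimizer of β ↦ G_w(β) + (μ/2)‖Xβ − Xβ̄‖₂². -/
theorem prox_min_iff_min {n p : ℕ} (hn : 0 < n) (hp : 0 < p)
    (r : LrIndex) (X : Matrix (Fin n) (Fin p) ℝ) (y : Fin n → ℝ)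
    (lam1 lam2 q : ℝ) (hlam1 : 0 < lam1) (hlam2 : 0 ≤ lam2)
    (hq0 : 0 < q) (hq1 : q < 1)
    (w : Fin p → ℝ) (hw : ∀ i, 0 ≤ w i) (βbar : Fin p → ℝ) :
    (∀ β : Fin p → ℝ, objG r X y lam1 lam2 q w βbar ≤ objG r X y lam1 lam2 q w β) ↔
    ∃ μ : ℝ, 0 ≤ μ ∧ ∀ β : Fin p → ℝ,
      objG r X y lam1 lam2 q w βbar
          + μ / 2 * ∑ j, ((X.mulVec βbar - X.mulVec βbar) j) ^ 2
        ≤ objG r X y lam1 lam2 q w β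
          + μ / 2 * ∑ j, ((X.mulVec β - X.mulVec βbar) j) ^ 2 :=
  prox_min_iff_min_general r X y lam1 lam2 q hlam1 hlam2 hq0 w hw βbar
end

section
/- Assume λ₂ > 0 and X_i ≠ 0 for every column i. If β* ∈ ℝ^p is a global minimizer of F (i.e., F(β*) ≤ F(β) for all β ∈ ℝ^p), then for every i with β*_i ≠ 0 one has |β*_i| > (q λ₁ / ‖X_i‖_r)^{1/(1−q)}. -/
open Finset Function Matrix

namespace LrIndex

def exponent : LrIndex → ENNReal
  | one => 1
  | two => 2
  | inf => ⊤

instance fact_one_le_exponent (r : LrIndex) : Fact (1 ≤ r.exponent) :=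
  ⟨by cases r <;> simp [exponent]⟩

end LrIndex

theorem lrNorm_eq_norm {n : ℕ} (r : LrIndex) (z : Fin n → ℝ) :
    lrNorm r z = ‖WithLp.toLp r.exponent z‖ := by
  cases r with
  | one => rw [LrIndex.exponent, PiLp.norm_eq_of_L1]; simp [lrNorm]
  | two => rw [LrIndex.exponent, EuclideanSpace.norm_eq]; simp [lrNorm]
  | inf => rw [LrIndex.exponent, PiLp.norm_eq_ciSup]; simp [lrNorm]

theorem lrNorm_pos {n : ℕ} (r : LrIndex) {w : Fin n → ℝ} (hw : w ≠ 0) : 0 < lrNorm r w := by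
  rw [lrNorm_eq_norm, norm_pos_iff]
  simpa using hw

theorem lrNorm_sub_smul_le {n : ℕ} (r : LrIndex) (a w : Fin n → ℝ) (t : ℝ) :
    lrNorm r (a - t • w) ≤ lrNorm r a + |t| * lrNorm r w := by
  simp only [lrNorm_eq_norm, WithLp.toLp_sub, WithLp.toLp_smul]
  exact (norm_sub_le _ _).trans_eq (by rw [norm_smul, Real.norm_eq_abs])

theorem sum_apply_update_zero {ι α M : Type*} [Fintype ι] [DecidableEq ι] [Zero α]
    [AddCommGroup M] {g : α → M} (hg : g 0 = 0) (β : ι → α) (i : ι) :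
    ∑ k, g (update β i 0 k) = ∑ k, g (β k) - g (β i) := by
  rw [← add_sum_erase _ _ (mem_univ i), ← add_sum_erase _ (fun k => g (β k)) (mem_univ i)]
  simp only [update_self, hg, zero_add, add_sub_cancel_left]
  exact sum_congr rfl fun k hk => by rw [update_of_ne (ne_of_mem_erase hk)]

theorem mulVec_update_zero {m ι R : Type*} [Fintype ι] [DecidableEq ι] [CommRing R]
    (X : Matrix m ι R) (β : ι → R) (i : ι) :
    X *ᵥ update β i 0 = X *ᵥ β - β i • fun j => X j i := by
  have hupdate : update β i 0 = β - Pi.single i (β i) := by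
    ext k; by_cases h : k = i <;> simp [h]
  ext j
  simp [hupdate, mulVec_sub, mul_comm]

theorem objF_update_zero_le {n p : ℕ} (r : LrIndex) (X : Matrix (Fin n) (Fin p) ℝ)
    (y : Fin n → ℝ) (lam1 lam2 : ℝ) {q : ℝ} (hq : q ≠ 0) (β : Fin p → ℝ) (i : Fin p) :
    objF r X y lam1 lam2 q (update β i 0) ≤ objF r X y lam1 lam2 q β
      + |β i| * lrNorm r (fun j => X j i) - lam2 * β i ^ 2 - lam1 * |β i| ^ q := by
  have hnorm := lrNorm_sub_smul_le r (X *ᵥ β - y) (fun j => X j i) (β i)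
  rw [sub_right_comm, ← mulVec_update_zero] at hnorm
  have hsq := sum_apply_update_zero (g := fun x : ℝ => x ^ 2) (by simp) β i
  have hrpow := sum_apply_update_zero (g := fun x : ℝ => |x| ^ q)
    (by simp [Real.zero_rpow hq]) β i
  simp only [objF] at hsq hrpow ⊢
  rw [hsq, hrpow]
  linarith

theorem rpow_one_div_one_sub_lt {a c t q : ℝ} (ha : 0 < a) (hc : 0 < c) (ht : 0 < t)
    (hq0 : 0 ≤ q) (hq1 : q < 1) (h : a * t ^ q ≤ t * c) :
    (q * a / c) ^ (1 / (1 - q)) < t := by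
  have htq : 0 < t ^ q := Real.rpow_pos_of_pos ht q
  have hlt : q * a / c < t ^ (1 - q) := by
    rw [Real.rpow_sub ht, Real.rpow_one, div_lt_div_iff₀ hc htq]
    nlinarith [mul_lt_mul_of_pos_right hq1 (mul_pos ha htq)]
  calc (q * a / c) ^ (1 / (1 - q))
      < (t ^ (1 - q)) ^ (1 / (1 - q)) := by gcongr
    _ = t := by rw [← Real.rpow_mul ht.le, mul_one_div_cancel (by linarith), Real.rpow_one]

theorem global_min_lower_bound_general {n p : ℕ}
    (r : LrIndex) (X : Matrix (Fin n) (Fin p) ℝ) (y : Fin n → ℝ)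
    (lam1 lam2 q : ℝ) (hlam1 : 0 < lam1) (hlam2 : 0 < lam2)
    (hq0 : 0 < q) (hq1 : q < 1)
    (hX : ∀ i : Fin p, (fun j => X j i) ≠ (0 : Fin n → ℝ))
    (βs : Fin p → ℝ)
    (hmin : ∀ β : Fin p → ℝ, objF r X y lam1 lam2 q βs ≤ objF r X y lam1 lam2 q β) :
    ∀ i : Fin p, βs i ≠ 0 →
      (q * lam1 / lrNorm r (fun j => X j i)) ^ (1 / (1 - q)) < |βs i| := by
  intro i hi
  have hzero := (hmin _).trans (objF_update_zero_le r X y lam1 lam2 hq0.ne' βs i)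
  refine rpow_one_div_one_sub_lt hlam1 (lrNorm_pos r (hX i)) (abs_pos.mpr hi) hq0.le hq1 ?_
  linarith [mul_nonneg hlam2.le (sq_nonneg (βs i))]

/-- lower bound for the nonzero entries of a global minimizer of F. -/
theorem global_min_lower_bound {n p : ℕ} (hn : 0 < n) (hp : 0 < p)
    (r : LrIndex) (X : Matrix (Fin n) (Fin p) ℝ) (y : Fin n → ℝ)
    (lam1 lam2 q : ℝ) (hlam1 : 0 < lam1) (hlam2 : 0 < lam2)
    (hq0 : 0 < q) (hq1 : q < 1)
    (hX : ∀ i : Fin p, (fun j => X j i) ≠ (0 : Fin n → ℝ))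
    (βs : Fin p → ℝ)
    (hmin : ∀ β : Fin p → ℝ, objF r X y lam1 lam2 q βs ≤ objF r X y lam1 lam2 q β) :
    ∀ i : Fin p, βs i ≠ 0 →
      (q * lam1 / lrNorm r (fun j => X j i)) ^ (1 / (1 - q)) < |βs i| :=
  global_min_lower_bound_general r X y lam1 lam2 q hlam1 hlam2 hq0 hq1 hX βs hmin
end

section
/- Let λ₂ ≥ 0 and fix ε > 0. Let (β^k)_{k≥0} be a sequence in ℝ^p such that for every k, β^{k+1} is a global minimizer of G_{w(β^k)}. If some subsequence β^{k_j} converges to β̄ ∈ ℝ^p (with k_j strictly increasing), then β̄ is a global minimizer of G_{w(β̄)}, i.e. G_{w(β̄)}(β̄) ≤ G_{w(β̄)}(β) for all β ∈ ℝ^p. -/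
/-- The weight vector w(β) with w(β)ᵢ = u_ε if βᵢ = 0, and min(u_ε, |βᵢ|^{q−1}) otherwise. -/
noncomputable def weightVec {p : ℕ} (q uε : ℝ) (β : Fin p → ℝ) : Fin p → ℝ :=
  fun i => if β i = 0 then uε else min uε (|β i| ^ (q - 1))

/-!
With `τ = (ε / (p λ₁))^{1/q}` we have `u_ε = τ^{q-1}` and `w(β)ᵢ = max(|βᵢ|, τ)^{q-1}`, which is
continuous in `β`. Let `φ` be the concave primitive of `t ↦ q max(t, τ)^{q-1}` and
`Φ(β) = ‖Xβ - y‖_r + λ₂‖β‖² + λ₁ Σᵢ φ(|βᵢ|)`. The tangent inequality for `φ` at `|βᵢ|` gives the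
majorization `Φ(β') + G_{w(β)}(β) ≤ Φ(β) + G_{w(β)}(β')`, so `Φ` decreases along the iterates and,
being bounded below, converges. Taking `β' = β^{k+1}` then gives
`G_{w(β^k)}(β^k) ≤ G_{w(β^k)}(β) + Φ(β^k) - Φ(β^{k+1})`, and the claim follows by letting `k = k_j`
tend to infinity.
-/

open Real Filter Topology

section MajorizeMinimize

variable {E : Type*} {Φ : E → ℝ} {G : E → E → ℝ} {x : ℕ → E}

lemma antitone_comp_of_majorize_minimize
    (hmaj : ∀ b b', Φ b' + G b b ≤ Φ b + G b b')
    (hstep : ∀ k β, G (x k) (x (k + 1)) ≤ G (x k) β) :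
    Antitone (Φ ∘ x) :=
  antitone_nat_of_succ_le fun k => by
    have := hmaj (x k) (x (k + 1))
    have := hstep k (x k)
    simp only [Function.comp_apply]
    linarith

theorem le_of_majorize_minimize [TopologicalSpace E]
    (hG : Continuous (Function.uncurry G)) (hΦ : BddBelow (Set.range Φ))
    (hmaj : ∀ b b', Φ b' + G b b ≤ Φ b + G b b')
    (hstep : ∀ k β, G (x k) (x (k + 1)) ≤ G (x k) β)
    {xbar : E} {ks : ℕ → ℕ} (hks : Tendsto ks atTop atTop)
    (hconv : Tendsto (x ∘ ks) atTop (𝓝 xbar)) (β : E) :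
    G xbar xbar ≤ G xbar β := by
  obtain ⟨L, hL⟩ : ∃ L, Tendsto (Φ ∘ x) atTop (𝓝 L) :=
    ⟨_, tendsto_atTop_ciInf (antitone_comp_of_majorize_minimize hmaj hstep)
      (hΦ.mono (Set.range_comp_subset_range x Φ))⟩
  have hgap : Tendsto (fun j => Φ (x (ks j)) - Φ (x (ks j + 1))) atTop (𝓝 0) := by
    simpa using (hL.comp hks).sub (((tendsto_add_atTop_iff_nat 1).2 hL).comp hks)
  have hdiag : Tendsto (fun j => G (x (ks j)) (x (ks j))) atTop (𝓝 (G xbar xbar)) :=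
    (hG.tendsto (xbar, xbar)).comp (hconv.prodMk_nhds hconv)
  have hfix : Tendsto (fun j => G (x (ks j)) β) atTop (𝓝 (G xbar β)) :=
    (hG.tendsto (xbar, β)).comp (hconv.prodMk_nhds tendsto_const_nhds)
  refine le_of_tendsto_of_tendsto' hdiag (by simpa using hfix.add hgap) fun j => ?_
  have := hmaj (x (ks j)) (x (ks j + 1))
  have := hstep (ks j) β
  linarith

end MajorizeMinimize

lemma rpow_le_rpow_add_mul_sub {q s t : ℝ} (hq0 : 0 ≤ q) (hq1 : q ≤ 1) (hs : 0 ≤ s)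
    (ht : 0 < t) : s ^ q ≤ t ^ q + q * t ^ (q - 1) * (s - t) := by
  have key := rpow_one_add_le_one_add_mul_self (s := s / t - 1)
    (by linarith [div_nonneg hs ht.le]) hq0 hq1
  rw [add_sub_cancel, div_rpow hs ht.le, div_le_iff₀ (rpow_pos_of_pos ht q)] at key
  rw [rpow_sub_one ht.ne']
  calc s ^ q ≤ (1 + q * (s / t - 1)) * t ^ q := key
    _ = t ^ q + q * (t ^ q / t) * (s - t) := by field_simp

noncomputable def truncWeight (τ q t : ℝ) : ℝ := max t τ ^ (q - 1)

/-- The concave primitive of `q * truncWeight τ q` vanishing at `0`. -/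
noncomputable def truncPenalty (τ q t : ℝ) : ℝ :=
  if t ≤ τ then q * τ ^ (q - 1) * t else t ^ q + (q - 1) * τ ^ q

section Truncation

variable {τ q : ℝ}

lemma weightVec_rpow_apply (hq1 : q ≤ 1) (hτ : 0 < τ) {p : ℕ} (β : Fin p → ℝ) (i : Fin p) :
    weightVec q (τ ^ (q - 1)) β i = truncWeight τ q |β i| := by
  unfold weightVec truncWeight
  split_ifs with h
  · simp [h, hτ.le]
  rcases le_total |β i| τ with hle | hle
  · rw [max_eq_right hle, min_eq_left]
    exact rpow_le_rpow_of_nonpos (abs_pos.mpr h) hle (by linarith)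
  · rw [max_eq_left hle, min_eq_right]
    exact rpow_le_rpow_of_nonpos hτ hle (by linarith)

lemma continuous_truncWeight (hτ : 0 < τ) : Continuous (truncWeight τ q) :=
  (continuous_id.max continuous_const).rpow_const fun t =>
    Or.inl (hτ.trans_le (le_max_right t τ)).ne'

lemma continuous_weightVec (hq1 : q ≤ 1) (hτ : 0 < τ) {p : ℕ} :
    Continuous (weightVec (p := p) q (τ ^ (q - 1))) := by
  refine continuous_pi fun i => ?_
  simp only [weightVec_rpow_apply hq1 hτ]
  exact (continuous_truncWeight hτ).comp (continuous_apply i).abs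

lemma truncPenalty_le_add_mul (hq0 : 0 ≤ q) (hq1 : q ≤ 1) (hτ : 0 < τ) {s : ℝ} (hs : 0 ≤ s)
    (t : ℝ) :
    truncPenalty τ q s ≤ truncPenalty τ q t + q * truncWeight τ q t * (s - t) := by
  have hτq : τ ^ (q - 1) * τ = τ ^ q := by rw [← rpow_add_one hτ.ne', sub_add_cancel]
  unfold truncPenalty truncWeight
  by_cases htτ : t ≤ τ <;> by_cases hsτ : s ≤ τ <;> simp only [htτ, hsτ, if_true, if_false]
  · rw [max_eq_right htτ]
    exact le_of_eq (by ring)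
  · rw [max_eq_right htτ]
    nlinarith [rpow_le_rpow_add_mul_sub hq0 hq1 hs hτ]
  · have hτt := not_le.mp htτ
    have ht0 := hτ.trans hτt
    rw [max_eq_left hτt.le]
    have hmono : t ^ (q - 1) ≤ τ ^ (q - 1) := rpow_le_rpow_of_nonpos hτ hτt.le (by linarith)
    nlinarith [rpow_le_rpow_add_mul_sub hq0 hq1 hτ.le ht0,
      mul_le_mul_of_nonneg_left hmono (mul_nonneg hq0 (sub_nonneg.2 hsτ))]
  · have hτt := not_le.mp htτ
    rw [max_eq_left hτt.le]
    linarith [rpow_le_rpow_add_mul_sub hq0 hq1 hs (hτ.trans hτt)]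

lemma sub_one_mul_rpow_le_truncPenalty (hq0 : 0 ≤ q) (hq1 : q ≤ 1) (hτ : 0 < τ) {t : ℝ}
    (ht : 0 ≤ t) : (q - 1) * τ ^ q ≤ truncPenalty τ q t := by
  have hneg : (q - 1) * τ ^ q ≤ 0 :=
    mul_nonpos_of_nonpos_of_nonneg (sub_nonpos.2 hq1) (rpow_nonneg hτ.le q)
  unfold truncPenalty
  split_ifs
  · linarith [mul_nonneg (mul_nonneg hq0 (rpow_nonneg hτ.le (q - 1))) ht]
  · linarith [rpow_nonneg ht q]

end Truncation

lemma lrNorm_nonneg {n : ℕ} (r : LrIndex) (z : Fin n → ℝ) : 0 ≤ lrNorm r z := by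
  cases r
  · exact Finset.sum_nonneg fun j _ => abs_nonneg _
  · exact sqrt_nonneg _
  · exact Real.iSup_nonneg fun j => abs_nonneg _

lemma lrNorm_inf_eq_norm {n : ℕ} (z : Fin n → ℝ) : lrNorm .inf z = ‖z‖ := by
  refine le_antisymm (Real.iSup_le (fun j => norm_le_pi_norm z j) (norm_nonneg z)) ?_
  refine (pi_norm_le_iff_of_nonneg (lrNorm_nonneg .inf z)).2 fun j => ?_
  exact le_ciSup (f := fun j => |z j|) (Set.finite_range _).bddAbove j

@[fun_prop]
lemma continuous_lrNorm {n : ℕ} (r : LrIndex) : Continuous (lrNorm (n := n) r) := by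
  cases r
  · unfold lrNorm; fun_prop
  · unfold lrNorm; fun_prop
  · simpa only [funext lrNorm_inf_eq_norm] using continuous_norm

lemma continuous_objG {n p : ℕ} (r : LrIndex) (X : Matrix (Fin n) (Fin p) ℝ) (y : Fin n → ℝ)
    (lam1 lam2 q : ℝ) :
    Continuous fun wβ : (Fin p → ℝ) × (Fin p → ℝ) => objG r X y lam1 lam2 q wβ.1 wβ.2 := by
  unfold objG
  fun_prop

noncomputable def penalizedObj {n p : ℕ} (r : LrIndex) (X : Matrix (Fin n) (Fin p) ℝ)
    (y : Fin n → ℝ) (lam1 lam2 τ q : ℝ) (β : Fin p → ℝ) : ℝ :=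
  lrNorm r (X.mulVec β - y) + lam2 * ∑ i, (β i) ^ 2 + lam1 * ∑ i, truncPenalty τ q |β i|

section Objective

variable {n p : ℕ} (r : LrIndex) (X : Matrix (Fin n) (Fin p) ℝ) (y : Fin n → ℝ)
  {lam1 lam2 τ q : ℝ}

lemma penalizedObj_add_objG_le (hlam1 : 0 ≤ lam1) (hq0 : 0 ≤ q) (hq1 : q ≤ 1) (hτ : 0 < τ)
    (β β' : Fin p → ℝ) :
    penalizedObj r X y lam1 lam2 τ q β' + objG r X y lam1 lam2 q (weightVec q (τ ^ (q - 1)) β) β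
      ≤ penalizedObj r X y lam1 lam2 τ q β
        + objG r X y lam1 lam2 q (weightVec q (τ ^ (q - 1)) β) β' := by
  set w := weightVec q (τ ^ (q - 1)) β with hw
  have hcoord : ∀ i, truncPenalty τ q |β' i| + q * (w i * |β i|)
      ≤ truncPenalty τ q |β i| + q * (w i * |β' i|) := fun i => by
    rw [hw, weightVec_rpow_apply hq1 hτ]
    linarith [truncPenalty_le_add_mul hq0 hq1 hτ (abs_nonneg (β' i)) |β i|]
  have hsum := Finset.sum_le_sum (s := .univ) fun i _ => hcoord i
  simp only [Finset.sum_add_distrib, ← Finset.mul_sum] at hsum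
  have hpen : lam1 * ∑ i, truncPenalty τ q |β' i| + q * lam1 * ∑ i, w i * |β i|
      ≤ lam1 * ∑ i, truncPenalty τ q |β i| + q * lam1 * ∑ i, w i * |β' i| := by
    linear_combination lam1 * hsum
  simp only [penalizedObj, objG]
  linarith

lemma bddBelow_range_penalizedObj (hlam1 : 0 ≤ lam1) (hlam2 : 0 ≤ lam2) (hq0 : 0 ≤ q)
    (hq1 : q ≤ 1) (hτ : 0 < τ) : BddBelow (Set.range (penalizedObj r X y lam1 lam2 τ q)) := by
  refine ⟨lam1 * ∑ _i : Fin p, (q - 1) * τ ^ q, ?_⟩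
  rintro _ ⟨β, rfl⟩
  have hpen := mul_le_mul_of_nonneg_left (Finset.sum_le_sum (s := .univ) fun i _ =>
    sub_one_mul_rpow_le_truncPenalty hq0 hq1 hτ (abs_nonneg (β i))) hlam1
  have hridge : 0 ≤ lam2 * ∑ i, β i ^ 2 := by positivity
  unfold penalizedObj
  linarith [lrNorm_nonneg r (X.mulVec β - y)]

end Objective

theorem accumulation_minimizes_G_general {n p : ℕ} (hp : 0 < p)
    (r : LrIndex) (X : Matrix (Fin n) (Fin p) ℝ) (y : Fin n → ℝ)
    (lam1 lam2 q ε : ℝ) (hlam1 : 0 < lam1) (hlam2 : 0 ≤ lam2)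
    (hq0 : 0 < q) (hq1 : q < 1) (hε : 0 < ε)
    (βseq : ℕ → Fin p → ℝ)
    (hseq : ∀ k : ℕ, ∀ β : Fin p → ℝ,
      objG r X y lam1 lam2 q
          (weightVec q ((ε / (p * lam1)) ^ ((q - 1) / q)) (βseq k)) (βseq (k + 1))
        ≤ objG r X y lam1 lam2 q
          (weightVec q ((ε / (p * lam1)) ^ ((q - 1) / q)) (βseq k)) β)
    (βbar : Fin p → ℝ) (ks : ℕ → ℕ) (hks : StrictMono ks)
    (hconv : Filter.Tendsto (fun j => βseq (ks j)) Filter.atTop (nhds βbar)) :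
    ∀ β : Fin p → ℝ,
      objG r X y lam1 lam2 q
          (weightVec q ((ε / (p * lam1)) ^ ((q - 1) / q)) βbar) βbar
        ≤ objG r X y lam1 lam2 q
          (weightVec q ((ε / (p * lam1)) ^ ((q - 1) / q)) βbar) β := by
  have hbase : 0 < ε / (p * lam1) := div_pos hε (mul_pos (Nat.cast_pos.2 hp) hlam1)
  set τ := (ε / (p * lam1)) ^ (1 / q)
  have hτ : 0 < τ := rpow_pos_of_pos hbase _
  have hu : (ε / (p * lam1)) ^ ((q - 1) / q) = τ ^ (q - 1) := by
    rw [← rpow_mul hbase.le, one_div_mul_eq_div]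
  rw [hu] at hseq ⊢
  exact le_of_majorize_minimize
    (G := fun b => objG r X y lam1 lam2 q (weightVec q (τ ^ (q - 1)) b))
    ((continuous_objG r X y lam1 lam2 q).comp
      ((continuous_weightVec hq1.le hτ).prodMap continuous_id))
    (bddBelow_range_penalizedObj r X y hlam1.le hlam2 hq0.le hq1.le hτ)
    (penalizedObj_add_objG_le r X y hlam1.le hq0.le hq1.le hτ) hseq hks.tendsto_atTop hconv

/-- a subsequential limit β̄ of the reweighted iterates is a global
minimizer of G_{w(β̄)}. -/
theorem accumulation_minimizes_G {n p : ℕ} (hn : 0 < n) (hp : 0 < p)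
    (r : LrIndex) (X : Matrix (Fin n) (Fin p) ℝ) (y : Fin n → ℝ)
    (lam1 lam2 q ε : ℝ) (hlam1 : 0 < lam1) (hlam2 : 0 ≤ lam2)
    (hq0 : 0 < q) (hq1 : q < 1) (hε : 0 < ε)
    (βseq : ℕ → Fin p → ℝ)
    (hseq : ∀ k : ℕ, ∀ β : Fin p → ℝ,
      objG r X y lam1 lam2 q
          (weightVec q ((ε / (p * lam1)) ^ ((q - 1) / q)) (βseq k)) (βseq (k + 1))
        ≤ objG r X y lam1 lam2 q
          (weightVec q ((ε / (p * lam1)) ^ ((q - 1) / q)) (βseq k)) β)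
    (βbar : Fin p → ℝ) (ks : ℕ → ℕ) (hks : StrictMono ks)
    (hconv : Filter.Tendsto (fun j => βseq (ks j)) Filter.atTop (nhds βbar)) :
    ∀ β : Fin p → ℝ,
      objG r X y lam1 lam2 q
          (weightVec q ((ε / (p * lam1)) ^ ((q - 1) / q)) βbar) βbar
        ≤ objG r X y lam1 lam2 q
          (weightVec q ((ε / (p * lam1)) ^ ((q - 1) / q)) βbar) β :=
  accumulation_minimizes_G_general hp r X y lam1 lam2 q ε hlam1 hlam2 hq0 hq1 hε βseq hseq βbar ks
    hks hconv
end
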